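/- arXiv:1903.09877 — 2 statements merged into one kernel-verified Lean document; each statement's English description precedes it below -/
import Mathlib

section
/- Let b ≥ 2 and let (V_i)_{i≥0} be a (0,s)-sequence in base b. For any n ≥ 2 let P_n = (V_0,…,V_{n−1}) be its first n points. Then P_n is completely quasi-equidistributed in base b, i.e., C_b(k;P_n) ≤ 1 for every k ∈ ℕ^s. -/
open MeasureTheory
open scoped Classical

noncomputable def gammaB (b : ℕ) (x y : ℝ) : ℕ∞ :=
  if x = y then ⊤
  else (↑(sInf {i : ℕ | ⌊(b : ℝ) ^ i * x⌋ = ⌊(b : ℝ) ^ i * y⌋ ∧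
      ⌊(b : ℝ) ^ (i + 1) * x⌋ ≠ ⌊(b : ℝ) ^ (i + 1) * y⌋}) : ℕ∞)

noncomputable def mB {n s : ℕ} (b : ℕ) (P : Fin n → Fin s → ℝ) (k : Fin s → ℕ) (l : Fin n) : ℕ :=
  (Finset.univ.filter fun j : Fin n =>
    j ≠ l ∧ ∀ r : Fin s, (k r : ℕ∞) ≤ gammaB b (P l r) (P j r)).card

noncomputable def nB {n s : ℕ} (b : ℕ) (P : Fin n → Fin s → ℝ) (i : Fin s → ℕ) (l : Fin n) : ℕ :=
  (Finset.univ.filter fun j : Fin n =>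
    j ≠ l ∧ ∀ r : Fin s, gammaB b (P l r) (P j r) = (i r : ℕ∞)).card

noncomputable def MB {n s : ℕ} (b : ℕ) (P : Fin n → Fin s → ℝ) (k : Fin s → ℕ) : ℕ :=
  ∑ l : Fin n, mB b P k l

noncomputable def NB {n s : ℕ} (b : ℕ) (P : Fin n → Fin s → ℝ) (i : Fin s → ℕ) : ℕ :=
  ∑ l : Fin n, nB b P i l

noncomputable def CB {n s : ℕ} (b : ℕ) (P : Fin n → Fin s → ℝ) (k : Fin s → ℕ) : ℝ :=
  (b : ℝ) ^ (∑ j, k j) * (MB b P k : ℝ) / ((n : ℝ) * ((n : ℝ) - 1))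

def ElemInterval (b s : ℕ) (k a : Fin s → ℕ) : Set (Fin s → ℝ) :=
  {x | ∀ j : Fin s, (a j : ℝ) / (b : ℝ) ^ k j ≤ x j ∧ x j < ((a j : ℝ) + 1) / (b : ℝ) ^ k j}

def kEquidistributed (b m : ℕ) {n s : ℕ} (P : Fin n → Fin s → ℝ) (k : Fin s → ℕ) : Prop :=
  ∀ a : Fin s → ℕ, (∀ j, a j < b ^ k j) →
    (Finset.univ.filter fun i : Fin n => P i ∈ ElemInterval b s k a).card = b ^ (m - ∑ j, k j)

def IsZeroSeq (b s : ℕ) (V : ℕ → Fin s → ℝ) : Prop :=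
  (∀ i j, V i j ∈ Set.Ico (0 : ℝ) 1) ∧
  ∀ ℓ v : ℕ, ∀ k : Fin s → ℕ, ∑ j, k j ≤ v →
    ∀ a : Fin s → ℕ, (∀ j, a j < b ^ k j) →
      (Finset.univ.filter fun i : Fin (b ^ v) =>
        V (ℓ * b ^ v + (i : ℕ)) ∈ ElemInterval b s k a).card = b ^ (v - ∑ j, k j)

/-! ### Auxiliary lemmas -/

lemma floorDivAux (a : ℝ) (m : ℕ) (hm : 0 < m) : ⌊a / (m:ℝ)⌋ = ⌊a⌋ / (m:ℤ) := by
  have hm' : (0:ℝ) < m := by exact_mod_cast hm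
  rw [Int.floor_eq_iff]
  constructor
  · rw [le_div_iff₀ hm']
    have h1 : (⌊a⌋ / (m:ℤ)) * m ≤ ⌊a⌋ := Int.ediv_mul_le ⌊a⌋ (by exact_mod_cast hm.ne')
    calc ((⌊a⌋ / (m:ℤ) : ℤ):ℝ) * m ≤ (⌊a⌋:ℝ) := by exact_mod_cast h1
      _ ≤ a := Int.floor_le a
  · rw [div_lt_iff₀ hm']
    have h2 : ⌊a⌋ + 1 ≤ (⌊a⌋/(m:ℤ)+1)*m := Int.lt_ediv_add_one_mul_self ⌊a⌋ (by exact_mod_cast hm)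
    calc a < (⌊a⌋:ℝ) + 1 := Int.lt_floor_add_one a
      _ ≤ ((⌊a⌋/(m:ℤ):ℤ) + 1) * m := by exact_mod_cast h2

lemma gamma_ge_iff {b : ℕ} (hb : 2 ≤ b) {x y : ℝ} (hx : x ∈ Set.Ico (0:ℝ) 1)
    (hy : y ∈ Set.Ico (0:ℝ) 1) (m : ℕ) :
    (m : ℕ∞) ≤ gammaB b x y ↔ ⌊(b:ℝ)^m * x⌋ = ⌊(b:ℝ)^m * y⌋ := by
  have hb0 : (0:ℝ) < b := by positivity
  by_cases hxy : x = y
  · subst hxy; simp [gammaB]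
  · rw [gammaB, if_neg hxy, Nat.cast_le]
    set agree := fun i : ℕ => ⌊(b:ℝ)^i * x⌋ = ⌊(b:ℝ)^i * y⌋ with hagree
    have hstep : ∀ i, agree (i+1) → agree i := by
      intro i h
      have ex : (b:ℝ)^i * x = ((b:ℝ)^(i+1) * x) / b := by field_simp; ring
      have ey : (b:ℝ)^i * y = ((b:ℝ)^(i+1) * y) / b := by field_simp; ring
      show ⌊(b:ℝ)^i * x⌋ = ⌊(b:ℝ)^i * y⌋
      rw [ex, ey, floorDivAux _ b (by omega), floorDivAux _ b (by omega), h]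
    have hmono : ∀ i j, i ≤ j → ¬ agree i → ¬ agree j := by
      intro i j hij hi
      induction j with
      | zero => simpa [Nat.le_zero.mp hij] using hi
      | succ j ih =>
        rcases Nat.lt_or_ge i (j+1) with h | h
        · exact fun hj => ih (by omega) (hstep j hj)
        · have : i = j + 1 := by omega
          subst this; exact hi
    have h0 : agree 0 := by
      show ⌊(b:ℝ)^0 * x⌋ = ⌊(b:ℝ)^0 * y⌋
      rw [pow_zero, one_mul, one_mul, Int.floor_eq_zero_iff.2 hx, Int.floor_eq_zero_iff.2 hy]
    have hexist : ∃ i, ¬ agree i := by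
      have hd : (0:ℝ) < |x - y| := abs_pos.2 (sub_ne_zero.2 hxy)
      obtain ⟨i, hi⟩ := pow_unbounded_of_one_lt (1/|x-y|) (show (1:ℝ) < b by exact_mod_cast hb)
      refine ⟨i, fun h => ?_⟩
      have h1 : |(b:ℝ)^i * x - (b:ℝ)^i * y| < 1 := Int.abs_sub_lt_one_of_floor_eq_floor h
      have h2 : (b:ℝ)^i * |x - y| < 1 := by
        rwa [← abs_of_pos (show (0:ℝ) < (b:ℝ)^i by positivity), ← abs_mul, mul_sub]
      rw [div_lt_iff₀ hd] at hi
      nlinarith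
    set T := {i : ℕ | ¬ agree i}
    have hTne : T.Nonempty := hexist
    set m0 := sInf T with hm0
    have hm0mem : m0 ∈ T := Nat.sInf_mem hTne
    have hm0pos : 0 < m0 := by
      rcases Nat.eq_zero_or_pos m0 with h | h
      · exact absurd h0 (h ▸ hm0mem)
      · exact h
    have hSmem : m0 - 1 ∈ {i : ℕ | ⌊(b : ℝ) ^ i * x⌋ = ⌊(b : ℝ) ^ i * y⌋ ∧
        ⌊(b : ℝ) ^ (i + 1) * x⌋ ≠ ⌊(b : ℝ) ^ (i + 1) * y⌋} := by
      constructor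
      · by_contra h
        exact Nat.notMem_of_lt_sInf (show m0 - 1 < m0 by omega) h
      · have : m0 - 1 + 1 = m0 := by omega
        rw [this]; exact hm0mem
    have hSinf : sInf {i : ℕ | ⌊(b : ℝ) ^ i * x⌋ = ⌊(b : ℝ) ^ i * y⌋ ∧
        ⌊(b : ℝ) ^ (i + 1) * x⌋ ≠ ⌊(b : ℝ) ^ (i + 1) * y⌋} = m0 - 1 := by
      apply le_antisymm (Nat.sInf_le hSmem)
      apply le_csInf ⟨_, hSmem⟩
      intro i hi
      have : m0 ≤ i + 1 := Nat.sInf_le hi.2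
      omega
    rw [hSinf]
    constructor
    · intro h
      by_contra hm
      have : m0 ≤ m := Nat.sInf_le (show m ∈ T from hm)
      omega
    · intro h
      have : m < m0 := by
        by_contra h2
        exact hmono m0 m (by omega) hm0mem h
      omega

lemma mem_elem_iff {b s : ℕ} (hb : 2 ≤ b) (k a : Fin s → ℕ) (x : Fin s → ℝ) :
    x ∈ ElemInterval b s k a ↔ ∀ j, ⌊(b:ℝ)^(k j) * x j⌋ = (a j : ℤ) := by
  have hb0 : (0:ℝ) < b := by positivity
  unfold ElemInterval
  simp only [Set.mem_setOf_eq]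
  refine forall_congr' fun j => ?_
  have hp : (0:ℝ) < (b:ℝ) ^ (k j) := by positivity
  rw [div_le_iff₀ hp, lt_div_iff₀ hp, Int.floor_eq_iff]
  constructor
  · rintro ⟨h1, h2⟩
    constructor
    · push_cast; linarith [h1]
    · push_cast; linarith [h2]
  · rintro ⟨h1, h2⟩
    constructor
    · push_cast at h1 ⊢; linarith
    · push_cast at h2 ⊢; linarith

lemma card_filter_fin (n : ℕ) (p : ℕ → Prop) [DecidablePred p] :
    (Finset.univ.filter fun i : Fin n => p (i:ℕ)).card = ((Finset.range n).filter p).card := by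
  rw [Finset.card_filter, Finset.card_filter, ← Fin.sum_univ_eq_sum_range]

lemma card_filter_shift (N L : ℕ) (p : ℕ → Prop) [DecidablePred p] :
    ((Finset.Ico L (L+N)).filter p).card
      = (Finset.univ.filter (fun i : Fin N => p (L + (i:ℕ)))).card := by
  rw [Finset.card_filter, Finset.card_filter, Finset.sum_Ico_eq_sum_range]
  simp only [Nat.add_sub_cancel_left]
  rw [← Fin.sum_univ_eq_sum_range]

lemma count_block {b s : ℕ} {V : ℕ → Fin s → ℝ} (hV : IsZeroSeq b s V)
    (k a : Fin s → ℕ) (ha : ∀ j, a j < b ^ k j) (ℓ : ℕ) :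
    ((Finset.Ico (ℓ * b ^ (∑ j, k j)) ((ℓ+1) * b ^ (∑ j, k j))).filter
      (fun i => V i ∈ ElemInterval b s k a)).card = 1 := by
  have h := hV.2 ℓ (∑ j, k j) k le_rfl a ha
  rw [Nat.sub_self, pow_zero] at h
  have e : (ℓ+1) * b ^ (∑ j, k j) = ℓ * b ^ (∑ j, k j) + b ^ (∑ j, k j) := by ring
  rw [e, card_filter_shift]
  convert h using 2

lemma count_range_mul {b s : ℕ} {V : ℕ → Fin s → ℝ} (hV : IsZeroSeq b s V)
    (k a : Fin s → ℕ) (ha : ∀ j, a j < b ^ k j) (q : ℕ) :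
    ((Finset.range (q * b ^ (∑ j, k j))).filter
      (fun i => V i ∈ ElemInterval b s k a)).card = q := by
  induction q with
  | zero => simp
  | succ q ih =>
    have hle : q * b ^ (∑ j, k j) ≤ (q+1) * b ^ (∑ j, k j) :=
      Nat.mul_le_mul_right _ (by omega)
    rw [Finset.range_eq_Ico,
      ← Finset.Ico_union_Ico_eq_Ico (Nat.zero_le (q * b ^ (∑ j, k j))) hle,
      Finset.filter_union,
      Finset.card_union_of_disjoint
        (Finset.disjoint_filter_filter (Finset.Ico_disjoint_Ico_consecutive _ _ _)),
      ← Finset.range_eq_Ico, ih, count_block hV k a ha q]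

theorem stmt9 (b s : ℕ) (hb : 2 ≤ b) (hs : 1 ≤ s) (V : ℕ → Fin s → ℝ)
    (hV : IsZeroSeq b s V) (n : ℕ) (hn : 2 ≤ n) (k : Fin s → ℕ) :
    CB b (fun i : Fin n => V (i : ℕ)) k ≤ 1 := by
  have hb0 : (0:ℝ) < b := by positivity
  set P : Fin n → Fin s → ℝ := fun i : Fin n => V (i : ℕ) with hP
  set v : ℕ := ∑ j, k j with hv
  set N : ℕ := b ^ v with hN
  have hN1 : 1 ≤ N := Nat.one_le_pow _ _ (by omega)
  set q : ℕ := n / N with hq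
  set r : ℕ := n % N with hr
  have hnqr : N * q + r = n := Nat.div_add_mod n N
  have hrN : r < N := Nat.mod_lt _ (by omega)
  -- the digit vector of each point
  set f : ℕ → Fin s → ℕ := fun i j => (⌊(b:ℝ)^(k j) * V i j⌋).toNat with hf
  have hfval : ∀ i j, ((f i j : ℤ)) = ⌊(b:ℝ)^(k j) * V i j⌋ := by
    intro i j
    exact Int.toNat_of_nonneg (Int.floor_nonneg.2 (by
      have := (hV.1 i j).1
      positivity))
  have hfa : ∀ i j, f i j < b ^ (k j) := by
    intro i j
    have h1 : ⌊(b:ℝ)^(k j) * V i j⌋ < (b:ℝ)^(k j) := by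
      calc (⌊(b:ℝ)^(k j) * V i j⌋ : ℝ) ≤ (b:ℝ)^(k j) * V i j := Int.floor_le _
        _ < (b:ℝ)^(k j) * 1 := by
            have := (hV.1 i j).2
            have hp : (0:ℝ) < (b:ℝ)^(k j) := by positivity
            nlinarith
        _ = (b:ℝ)^(k j) := by ring
    have : (f i j : ℝ) < (b:ℝ)^(k j) := by
      rw [show ((f i j : ℝ)) = ((f i j : ℤ) : ℝ) by push_cast; ring, hfval i j]; exact h1
    exact_mod_cast (by push_cast at this ⊢; exact this : (f i j : ℝ) < ((b^(k j) : ℕ) : ℝ))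
  -- membership in an elementary interval is equality of digit vectors
  have hmemf : ∀ (i : ℕ) (a : Fin s → ℕ),
      V i ∈ ElemInterval b s k a ↔ ∀ j, f i j = a j := by
    intro i a
    rw [mem_elem_iff hb]
    refine forall_congr' fun j => ?_
    rw [← hfval i j]
    exact_mod_cast Iff.rfl
  have hsym : ∀ i i' : ℕ, (V i ∈ ElemInterval b s k (f i')) ↔ (V i' ∈ ElemInterval b s k (f i)) := by
    intro i i'
    rw [hmemf, hmemf]
    exact ⟨fun h j => (h j).symm, fun h j => (h j).symm⟩
  -- counting points in an elementary interval among the first n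
  have hqN : q * N ≤ n := by
    have : q * N = N * q := Nat.mul_comm _ _
    omega
  have hnle : n ≤ (q+1) * N := by
    have e1 : (q+1) * N = q * N + N := by ring
    have e2 : q * N = N * q := Nat.mul_comm _ _
    omega
  have hcount : ∀ a : Fin s → ℕ, (∀ j, a j < b ^ k j) →
      ((Finset.range n).filter (fun i => V i ∈ ElemInterval b s k a)).card
        = q + ((Finset.Ico (q*N) n).filter (fun i => V i ∈ ElemInterval b s k a)).card := by
    intro a ha
    rw [Finset.range_eq_Ico,
      ← Finset.Ico_union_Ico_eq_Ico (Nat.zero_le (q*N)) hqN,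
      Finset.filter_union,
      Finset.card_union_of_disjoint
        (Finset.disjoint_filter_filter (Finset.Ico_disjoint_Ico_consecutive _ _ _)),
      ← Finset.range_eq_Ico]
    congr 1
    exact count_range_mul hV k a ha q
  have hpartial : ∀ a : Fin s → ℕ, (∀ j, a j < b ^ k j) →
      ((Finset.Ico (q*N) n).filter (fun i => V i ∈ ElemInterval b s k a)).card ≤ 1 := by
    intro a ha
    calc ((Finset.Ico (q*N) n).filter (fun i => V i ∈ ElemInterval b s k a)).card
        ≤ ((Finset.Ico (q*N) ((q+1)*N)).filter (fun i => V i ∈ ElemInterval b s k a)).card :=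
          Finset.card_le_card (Finset.filter_subset_filter _
            (Finset.Ico_subset_Ico le_rfl hnle))
      _ = 1 := count_block hV k a ha q
  have hfav : ∀ i : ℕ, ∀ j, f i j < b ^ k j := hfa
  -- mB in terms of interval counts
  have hmB : ∀ l : Fin n, mB b P k l + 1
      = ((Finset.range n).filter (fun i => V i ∈ ElemInterval b s k (f (l:ℕ)))).card := by
    intro l
    have hQl : V (l:ℕ) ∈ ElemInterval b s k (f (l:ℕ)) := (hmemf _ _).2 fun j => rfl
    have hiff : ∀ j : Fin n,
        ((j ≠ l ∧ ∀ r : Fin s, (k r : ℕ∞) ≤ gammaB b (P l r) (P j r)))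
          ↔ (j ≠ l ∧ V (j:ℕ) ∈ ElemInterval b s k (f (l:ℕ))) := by
      intro j
      refine and_congr_right fun _ => ?_
      rw [hmemf]
      refine forall_congr' fun rr => ?_
      rw [gamma_ge_iff hb (hV.1 _ _) (hV.1 _ _)]
      constructor
      · intro h
        have : (f (j:ℕ) rr : ℤ) = (f (l:ℕ) rr : ℤ) := by
          rw [hfval, hfval, h]
        exact_mod_cast this
      · intro h
        have : (f (l:ℕ) rr : ℤ) = (f (j:ℕ) rr : ℤ) := by exact_mod_cast h.symm
        rw [hfval, hfval] at this
        exact this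
    rw [mB, Finset.filter_congr (fun j _ => hiff j)]
    have he : (Finset.univ.filter fun j : Fin n =>
        j ≠ l ∧ V (j:ℕ) ∈ ElemInterval b s k (f (l:ℕ)))
        = (Finset.univ.filter fun j : Fin n =>
            V (j:ℕ) ∈ ElemInterval b s k (f (l:ℕ))).erase l := by
      ext j
      simp only [Finset.mem_filter, Finset.mem_erase, Finset.mem_univ, true_and]
      try tauto
    have hlmem : l ∈ Finset.univ.filter fun j : Fin n =>
        V (j:ℕ) ∈ ElemInterval b s k (f (l:ℕ)) := by
      simp only [Finset.mem_filter, Finset.mem_univ, true_and]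
      exact hQl
    rw [he, Finset.card_erase_of_mem hlmem,
      Nat.sub_add_cancel (Finset.card_pos.2 ⟨l, hlmem⟩)]
    convert card_filter_fin n (fun i => V i ∈ ElemInterval b s k (f (l:ℕ))) using 2
  -- summing up
  set E : ℕ := ∑ l : Fin n, ((Finset.Ico (q*N) n).filter
      (fun i => V i ∈ ElemInterval b s k (f (l:ℕ)))).card with hE
  have hsum : MB b P k + n = n * q + E := by
    have h1 : MB b P k + n = ∑ l : Fin n, (mB b P k l + 1) := by
      rw [Finset.sum_add_distrib, Finset.sum_const, Finset.card_univ, Fintype.card_fin,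
        smul_eq_mul, mul_one, MB]
    rw [h1]
    have h2 : ∀ l : Fin n, mB b P k l + 1
        = q + ((Finset.Ico (q*N) n).filter
            (fun i => V i ∈ ElemInterval b s k (f (l:ℕ)))).card := by
      intro l
      rw [hmB l, hcount _ (hfav _)]
    rw [Finset.sum_congr rfl (fun l _ => h2 l), Finset.sum_add_distrib,
      Finset.sum_const, Finset.card_univ, Fintype.card_fin, smul_eq_mul, hE]
  -- bound on E
  have hcardIco : (Finset.Ico (q*N) n).card = r := by
    rw [Nat.card_Ico]
    have : q * N = N * q := Nat.mul_comm _ _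
    omega
  have hEle : E ≤ r * (q + 1) := by
    have e1 : E = ∑ i ∈ Finset.Ico (q*N) n,
        ((Finset.range n).filter (fun l => V l ∈ ElemInterval b s k (f i))).card := by
      rw [hE]
      have e2 : ∀ l : Fin n, ((Finset.Ico (q*N) n).filter
          (fun i => V i ∈ ElemInterval b s k (f (l:ℕ)))).card
          = ∑ i ∈ Finset.Ico (q*N) n,
              (if V (l:ℕ) ∈ ElemInterval b s k (f i) then 1 else 0) := by
        intro l
        rw [Finset.card_filter]
        exact Finset.sum_congr rfl fun i _ => by
          by_cases h : V i ∈ ElemInterval b s k (f (l:ℕ))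
          · rw [if_pos h, if_pos ((hsym i (l:ℕ)).1 h)]
          · rw [if_neg h, if_neg (fun h' => h ((hsym i (l:ℕ)).2 h'))]
      rw [Finset.sum_congr rfl (fun l _ => e2 l), Finset.sum_comm]
      refine Finset.sum_congr rfl fun i _ => ?_
      rw [← card_filter_fin n (fun l => V l ∈ ElemInterval b s k (f i)), Finset.card_filter]
    rw [e1]
    calc ∑ i ∈ Finset.Ico (q*N) n,
        ((Finset.range n).filter (fun l => V l ∈ ElemInterval b s k (f i))).card
        ≤ ∑ _i ∈ Finset.Ico (q*N) n, (q + 1) := by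
          refine Finset.sum_le_sum fun i _ => ?_
          rw [hcount _ (hfav i)]
          have := hpartial _ (hfav i)
          omega
      _ = r * (q + 1) := by rw [Finset.sum_const, smul_eq_mul, hcardIco]
  -- final arithmetic
  have hkey : N * MB b P k + n ≤ n * n := by
    have h1 : N * MB b P k + N * n = N * (n * q) + N * E := by
      rw [← Nat.mul_add, hsum, Nat.mul_add]
    have hr2 : r ≤ r * r := by
      rcases Nat.eq_zero_or_pos r with h | h
      · simp [h]
      · exact Nat.le_mul_of_pos_left r h
    have hq2 : N * q ≤ N * (N * q) := Nat.le_mul_of_pos_left (N * q) (by omega)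
    have h2 : N * E ≤ N * (r * (q + 1)) := Nat.mul_le_mul_left N hEle
    have hg : N * (n * q) + N * E + n ≤ n * n + N * n := by
      have h3 : N * (n * q) + N * E + n ≤ N * (n * q) + N * (r * (q + 1)) + n := by omega
      refine h3.trans ?_
      rw [← hnqr]
      nlinarith [hr2, hq2]
    linarith [h1, hg]
  -- conclude
  have hpos : (0:ℝ) < (n:ℝ) * ((n:ℝ) - 1) := by
    have h2 : (2:ℝ) ≤ (n:ℝ) := by exact_mod_cast hn
    nlinarith
  rw [CB, div_le_one hpos]
  have hNc : ((b:ℝ))^(∑ j, k j) = (N:ℝ) := by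
    rw [hN, hv]; push_cast; ring
  rw [hNc]
  have hkey' : (N:ℝ) * (MB b P k : ℝ) + (n:ℝ) ≤ (n:ℝ) * (n:ℝ) := by exact_mod_cast hkey
  linarith
end

section
/- Let b be a prime, m ≥ 1, and let P_n = (V_0,…,V_{b^m−1}) be the digital net in base b with generating matrices C_1,…,C_s ∈ F_b^{m×m}, each of which is nonsingular (equivalently, each one-dimensional projection of P_n is a (0,m,1)-net in base b). Then for every k ∈ ℕ^s with |k| ≤ m, P_n is k-equidistributed in base b if and only if C_b(k;P_n) ≤ 1. -/
open MeasureTheory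
open scoped Classical

noncomputable def digitalNet (b m s : ℕ) (C : Fin s → Matrix (Fin m) (Fin m) (ZMod b)) :
    Fin (b ^ m) → Fin s → ℝ :=
  fun i ℓ => ∑ r : Fin m,
    ((((C ℓ).mulVec fun p : Fin m => ((((i : ℕ) / b ^ (p : ℕ)) % b : ℕ) : ZMod b)) r).val : ℝ) /
      (b : ℝ) ^ ((r : ℕ) + 1)

noncomputable def stackRank (b m s : ℕ) (C : Fin s → Matrix (Fin m) (Fin m) (ZMod b))
    (k : Fin s → ℕ) (hk : ∀ j, k j ≤ m) : ℕ :=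
  (Matrix.of fun (x : (j : Fin s) × Fin (k j)) (p : Fin m) =>
    C x.1 ⟨(x.2 : ℕ), lt_of_lt_of_le x.2.2 (hk x.1)⟩ p).rank

/-!
Let `u(i) ∈ 𝔽_b^m` be the digit vector of the index `i`, and `T` the linear map whose rows are the
first `k_j` rows of `C_j`, `j = 1, …, s`. The first `t` base-`b` digits of a coordinate
`∑_r d_r b^{-(r+1)}` are `d_1, …, d_t`, so `V_i` lies in the elementary `k`-interval with digit
vector `v` iff `T u(i) = v`, and `γ_b(V_{l,j}, V_{i,j}) ≥ k_j` for all `j` iff `T u(l) = T u(i)`.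
Hence every elementary `k`-interval contains either no point or `|ker T| = b^{m-ρ}` points,
where `ρ = rank T`, and `M_b(k; P_n) = b^m (b^{m-ρ} - 1)`. Equidistribution is thus equivalent
to `T` being onto, i.e. `ρ = |k|`, and so is `C_b(k; P_n) ≤ 1`, which reads
`b^{|k|} (b^{m-ρ} - 1) ≤ b^m - 1` and, as `|k| ≤ m`, holds exactly when `ρ = |k|`.
-/

open Finset Matrix

section Digits

variable {b : ℕ} [NeZero b]

def zmodEquivFin (b : ℕ) [NeZero b] : ZMod b ≃ Fin b where
  toFun z := ⟨z.val, z.val_lt⟩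
  invFun x := (x : ℕ)
  left_inv := ZMod.natCast_zmod_val
  right_inv x := Fin.ext (ZMod.val_cast_of_lt x.2)

def digitEquiv (b m : ℕ) [NeZero b] : (Fin m → ZMod b) ≃ Fin (b ^ m) :=
  (Equiv.piCongrRight fun _ => zmodEquivFin b).trans finFunctionFinEquiv

theorem digitEquiv_symm_apply {m : ℕ} (a : Fin (b ^ m)) (p : Fin m) :
    (digitEquiv b m).symm a p = ((a / b ^ (p : ℕ) % b : ℕ) : ZMod b) := rfl

theorem digitEquiv_apply_val {m : ℕ} (z : Fin m → ZMod b) :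
    (digitEquiv b m z : ℕ) = ∑ p, (z p).val * b ^ (p : ℕ) := rfl

end Digits

section RadixValue

noncomputable def radixValue (b : ℕ) {m : ℕ} (z : Fin m → ZMod b) : ℝ :=
  ∑ r : Fin m, ((z r).val : ℝ) / (b : ℝ) ^ ((r : ℕ) + 1)

theorem radixValue_nonneg {b m : ℕ} (z : Fin m → ZMod b) : 0 ≤ radixValue b z :=
  Finset.sum_nonneg fun _ _ => by positivity

variable {b : ℕ} [NeZero b]

theorem radixValue_eq_digitEquiv_rev_div {m : ℕ} (z : Fin m → ZMod b) :
    radixValue b z = (digitEquiv b m (z ∘ Fin.rev) : ℕ) / (b : ℝ) ^ m := by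
  have hb : (b : ℝ) ≠ 0 := NeZero.ne _
  rw [digitEquiv_apply_val, Nat.cast_sum, Finset.sum_div, radixValue,
    ← Fintype.sum_equiv Fin.revPerm _ _ fun _ => rfl]
  refine Finset.sum_congr rfl fun r _ => ?_
  have hm : (b : ℝ) ^ m = (b : ℝ) ^ (r : ℕ) * (b : ℝ) ^ ((r.rev : ℕ) + 1) := by
    rw [← pow_add, Fin.val_rev]; congr 1; omega
  rw [Fin.revPerm_apply, Function.comp_apply, hm]
  push_cast
  field_simp

theorem floor_pow_mul_radixValue {m t : ℕ} (ht : t ≤ m) (z : Fin m → ZMod b) :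
    ⌊(b : ℝ) ^ t * radixValue b z⌋₊ = digitEquiv b t fun q => z (Fin.castLE ht q.rev) := by
  rw [radixValue_eq_digitEquiv_rev_div]
  set N := (digitEquiv b m (z ∘ Fin.rev) : ℕ)
  have hfloor : ⌊(b : ℝ) ^ t * ((N : ℝ) / (b : ℝ) ^ m)⌋₊ = N / b ^ (m - t) := by
    have hb : (b : ℝ) ≠ 0 := NeZero.ne _
    have hm : (b : ℝ) ^ m = (b : ℝ) ^ (m - t) * (b : ℝ) ^ t := by
      rw [← pow_add, Nat.sub_add_cancel ht]
    have hval : (b : ℝ) ^ t * ((N : ℝ) / (b : ℝ) ^ m) = (N : ℝ) / ((b ^ (m - t) : ℕ) : ℝ) := by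
      rw [hm]
      push_cast
      field_simp
    rw [hval, Nat.floor_div_natCast, Nat.floor_natCast]
  have hlt : N / b ^ (m - t) < b ^ t := by
    rw [Nat.div_lt_iff_lt_mul (pow_pos (Nat.pos_of_neZero b) _), ← pow_add, Nat.add_sub_cancel' ht]
    exact (digitEquiv b m _).2
  rw [hfloor, ← Fin.val_mk hlt, Fin.val_inj, ← Equiv.symm_apply_eq]
  funext q
  have hq : m - t + q < m := by omega
  have hdigit := congrFun ((digitEquiv b m).symm_apply_apply (z ∘ Fin.rev)) ⟨m - t + q, hq⟩
  rw [digitEquiv_symm_apply] at hdigit ⊢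
  rw [Nat.div_div_eq_div_mul, ← pow_add, hdigit, Function.comp_apply]
  congr 1
  ext
  simp only [Fin.val_rev, Fin.val_castLE]
  omega

theorem floor_pow_mul_radixValue_eq_iff {m t : ℕ} (ht : t ≤ m) (z w : Fin m → ZMod b) :
    ⌊(b : ℝ) ^ t * radixValue b z⌋₊ = ⌊(b : ℝ) ^ t * radixValue b w⌋₊ ↔
      ∀ r : Fin t, z (Fin.castLE ht r) = w (Fin.castLE ht r) := by
  rw [floor_pow_mul_radixValue ht, floor_pow_mul_radixValue ht, Fin.val_inj,
    (digitEquiv b t).apply_eq_iff_eq, funext_iff, Fin.rev_surjective.forall]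
  simp only [Fin.rev_rev]

theorem floor_pow_mul_radixValue_eq_iff_of_lt {m t a : ℕ} (ht : t ≤ m) (ha : a < b ^ t)
    (z : Fin m → ZMod b) :
    ⌊(b : ℝ) ^ t * radixValue b z⌋₊ = a ↔
      ∀ r : Fin t, z (Fin.castLE ht r) = ((a / b ^ (t - 1 - r) % b : ℕ) : ZMod b) := by
  rw [floor_pow_mul_radixValue ht, ← Fin.val_mk ha, Fin.val_inj, ← Equiv.eq_symm_apply,
    funext_iff, Fin.rev_surjective.forall]
  simp only [Fin.rev_rev, digitEquiv_symm_apply, Fin.val_rev, Nat.sub_sub, add_comm 1]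

theorem floor_radixValue {m : ℕ} (z : Fin m → ZMod b) : ⌊radixValue b z⌋ = 0 := by
  have h := floor_pow_mul_radixValue (Nat.zero_le m) z
  rw [pow_zero, one_mul] at h
  rw [← Int.natCast_floor_eq_floor (radixValue_nonneg z), h]
  exact_mod_cast Nat.lt_one_iff.1 ((digitEquiv b 0 _).2.trans_eq (pow_zero b))

end RadixValue

theorem le_sInf_setOf_and_not_succ_iff {A : ℕ → Prop} (hA : Antitone A) (h0 : A 0)
    (hfin : ∃ i, ¬A i) (t : ℕ) : t ≤ sInf {i | A i ∧ ¬A (i + 1)} ↔ A t := by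
  classical
  obtain ⟨n, hiff⟩ : ∃ n, ∀ i, A i ↔ i < n := ⟨Nat.find hfin, fun i =>
    ⟨fun hi => lt_of_not_ge fun hni => Nat.find_spec hfin (hA hni hi),
      fun hi => not_not.1 (Nat.find_min hfin hi)⟩⟩
  have hpos : 0 < n := (hiff 0).1 h0
  have hset : {i | A i ∧ ¬A (i + 1)} = {n - 1} := by
    ext i
    simp only [Set.mem_ofPred_eq, Set.mem_singleton_iff, hiff]
    omega
  rw [hset, csInf_singleton, hiff]
  omega

theorem antitone_floor_pow_mul_eq {b : ℕ} (hb : b ≠ 0) (x y : ℝ) :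
    Antitone fun i : ℕ => ⌊(b : ℝ) ^ i * x⌋ = ⌊(b : ℝ) ^ i * y⌋ := by
  have hdiv : ∀ (i : ℕ) (z : ℝ), ⌊(b : ℝ) ^ i * z⌋ = ⌊(b : ℝ) ^ (i + 1) * z⌋ / b := by
    intro i z
    rw [← Int.floor_div_natCast, pow_succ]
    congr 1
    field_simp
  refine antitone_nat_of_succ_le fun i (h : _ = _) => ?_
  rw [hdiv i x, hdiv i y, h]

theorem exists_floor_pow_mul_ne {b : ℕ} (hb : 1 < b) {x y : ℝ} (hxy : x ≠ y) :
    ∃ i : ℕ, ⌊(b : ℝ) ^ i * x⌋ ≠ ⌊(b : ℝ) ^ i * y⌋ := by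
  have hd : 0 < |x - y| := abs_pos.2 (sub_ne_zero.2 hxy)
  obtain ⟨i, hi⟩ := pow_unbounded_of_one_lt |x - y|⁻¹ (by exact_mod_cast hb : (1 : ℝ) < b)
  refine ⟨i, fun h => ?_⟩
  have hclose := Int.abs_sub_lt_one_of_floor_eq_floor h
  rw [← mul_sub, abs_mul, abs_of_pos (by positivity)] at hclose
  rw [inv_lt_iff_one_lt_mul₀ hd] at hi
  linarith

theorem natCast_le_gammaB_iff {b : ℕ} (hb : 1 < b) {x y : ℝ} (h0 : ⌊x⌋ = ⌊y⌋) (t : ℕ) :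
    (t : ℕ∞) ≤ gammaB b x y ↔ ⌊(b : ℝ) ^ t * x⌋ = ⌊(b : ℝ) ^ t * y⌋ := by
  unfold gammaB
  split_ifs with hxy
  · simp [hxy]
  · rw [Nat.cast_le]
    exact le_sInf_setOf_and_not_succ_iff (antitone_floor_pow_mul_eq (by omega) x y)
      (by simpa using h0) (exists_floor_pow_mul_ne hb hxy) t

theorem mem_elemInterval_iff {b s : ℕ} (hb : 0 < b) {k a : Fin s → ℕ} {x : Fin s → ℝ}
    (hx : ∀ j, 0 ≤ x j) : x ∈ ElemInterval b s k a ↔ ∀ j, ⌊(b : ℝ) ^ k j * x j⌋₊ = a j := by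
  refine forall_congr' fun j => ?_
  have hpow : (0 : ℝ) < (b : ℝ) ^ k j := by positivity
  rw [Nat.floor_eq_iff (mul_nonneg hpow.le (hx j)), div_le_iff₀ hpow, lt_div_iff₀ hpow,
    mul_comm (x j)]

theorem natCard_fiber_eq_natCard_ker {R V W : Type*} [Ring R] [AddCommGroup V] [Module R V]
    [AddCommGroup W] [Module R W] (T : V →ₗ[R] W) (v₀ : V) :
    Nat.card {v // T v = T v₀} = Nat.card (LinearMap.ker T) :=
  Nat.card_congr
    { toFun v := ⟨v - v₀, by simp [v.2]⟩
      invFun u := ⟨u + v₀, by simp [LinearMap.mem_ker.1 u.2]⟩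
      left_inv v := by simp
      right_inv u := by simp }

theorem pow_mul_pow_sub_one_div_pow_sub_one_le_one_iff {x : ℝ} (hx : 2 ≤ x) {κ ρ m : ℕ}
    (hκ : κ ≤ m) (hρ : ρ ≤ κ) : x ^ κ * (x ^ (m - ρ) - 1) / (x ^ m - 1) ≤ 1 ↔ ρ = κ := by
  constructor
  · intro h
    by_contra hne
    have hpos : 0 < x ^ m - 1 := sub_pos.2 (one_lt_pow₀ (by linarith) (by omega))
    rw [div_le_one hpos, mul_sub, mul_one, ← pow_add] at h
    have hbig : x * x ^ m ≤ x ^ (κ + (m - ρ)) := by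
      rw [← pow_succ']
      exact pow_le_pow_right₀ (by linarith) (by omega)
    have hsmall : x ^ κ ≤ x ^ m := pow_le_pow_right₀ (by linarith) hκ
    nlinarith
  · rintro rfl
    refine div_le_one_of_le₀ ?_ (sub_nonneg.2 (one_le_pow₀ (by linarith)))
    rw [mul_sub, mul_one, ← pow_add, Nat.add_sub_cancel' hκ]
    linarith [one_le_pow₀ (M₀ := ℝ) (n := ρ) (by linarith : (1 : ℝ) ≤ x)]

section DigitalNet

variable {b m s : ℕ}

def stackMatrix (C : Fin s → Matrix (Fin m) (Fin m) (ZMod b)) (k : Fin s → ℕ)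
    (hk : ∀ j, k j ≤ m) : Matrix ((j : Fin s) × Fin (k j)) (Fin m) (ZMod b) :=
  Matrix.of fun x p => C x.1 ⟨(x.2 : ℕ), lt_of_lt_of_le x.2.2 (hk x.1)⟩ p

/-- The digit vector of the elementary interval `∏ [a_j b^{-k_j}, (a_j + 1) b^{-k_j})`: its
entry `(j, r)` is the `(r + 1)`-st base-`b` digit of `a_j / b^{k_j}`. -/
def cellVec (b : ℕ) (k a : Fin s → ℕ) : ((j : Fin s) × Fin (k j)) → ZMod b :=
  fun x => ((a x.1 / b ^ (k x.1 - 1 - x.2) % b : ℕ) : ZMod b)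

variable [Fact (1 < b)] (C : Fin s → Matrix (Fin m) (Fin m) (ZMod b)) {k : Fin s → ℕ}
  (hk : ∀ j, k j ≤ m)

theorem exists_cellVec_eq (v : ((j : Fin s) × Fin (k j)) → ZMod b) :
    ∃ a : Fin s → ℕ, (∀ j, a j < b ^ k j) ∧ cellVec b k a = v := by
  refine ⟨fun j => digitEquiv b (k j) fun q => v ⟨j, q.rev⟩, fun j => (digitEquiv _ _ _).2, ?_⟩
  funext ⟨j, r⟩
  have hdigit := congrFun ((digitEquiv b (k j)).symm_apply_apply fun q => v ⟨j, q.rev⟩) r.rev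
  simpa only [cellVec, digitEquiv_symm_apply, Fin.val_rev, Fin.rev_rev, Nat.sub_sub, add_comm 1]
    using hdigit

theorem digitalNet_apply (i : Fin (b ^ m)) (ℓ : Fin s) :
    digitalNet b m s C i ℓ = radixValue b (C ℓ *ᵥ (digitEquiv b m).symm i) := rfl

theorem digitalNet_mem_elemInterval_iff {a : Fin s → ℕ} (ha : ∀ j, a j < b ^ k j)
    (i : Fin (b ^ m)) :
    digitalNet b m s C i ∈ ElemInterval b s k a ↔
      stackMatrix C k hk *ᵥ (digitEquiv b m).symm i = cellVec b k a := by
  rw [mem_elemInterval_iff (x := digitalNet b m s C i) (Nat.pos_of_neZero b)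
    fun ℓ => radixValue_nonneg _, funext_iff, Sigma.forall]
  refine forall_congr' fun j => ?_
  rw [digitalNet_apply, floor_pow_mul_radixValue_eq_iff_of_lt (hk j) (ha j)]
  exact Iff.rfl

theorem forall_le_gammaB_digitalNet_iff (l i : Fin (b ^ m)) :
    (∀ r, (k r : ℕ∞) ≤ gammaB b (digitalNet b m s C l r) (digitalNet b m s C i r)) ↔
      stackMatrix C k hk *ᵥ (digitEquiv b m).symm l =
        stackMatrix C k hk *ᵥ (digitEquiv b m).symm i := by
  have hfloor : ∀ {t : ℕ} {x y : ℝ}, 0 ≤ x → 0 ≤ y →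
      (⌊(b : ℝ) ^ t * x⌋ = ⌊(b : ℝ) ^ t * y⌋ ↔ ⌊(b : ℝ) ^ t * x⌋₊ = ⌊(b : ℝ) ^ t * y⌋₊) := by
    intro t x y hx hy
    rw [← Int.natCast_floor_eq_floor (by positivity), ← Int.natCast_floor_eq_floor (by positivity),
      Nat.cast_inj]
  rw [funext_iff, Sigma.forall]
  refine forall_congr' fun j => ?_
  simp only [digitalNet_apply]
  have hx := radixValue_nonneg (C j *ᵥ (digitEquiv b m).symm l)
  have hy := radixValue_nonneg (C j *ᵥ (digitEquiv b m).symm i)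
  have h0 := (floor_radixValue (C j *ᵥ (digitEquiv b m).symm l)).trans
    (floor_radixValue (C j *ᵥ (digitEquiv b m).symm i)).symm
  rw [natCast_le_gammaB_iff Fact.out h0, hfloor hx hy, floor_pow_mul_radixValue_eq_iff (hk j)]
  exact Iff.rfl

end DigitalNet

section Counting

variable {b m s : ℕ} (C : Fin s → Matrix (Fin m) (Fin m) (ZMod b)) {k : Fin s → ℕ}
  (hk : ∀ j, k j ≤ m)

theorem card_filter_digitalNet_mem_elemInterval [Fact (1 < b)] {a : Fin s → ℕ}
    (ha : ∀ j, a j < b ^ k j) :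
    #{i | digitalNet b m s C i ∈ ElemInterval b s k a} =
      Nat.card {w // stackMatrix C k hk *ᵥ w = cellVec b k a} := by
  rw [← Fintype.card_subtype, ← Nat.card_eq_fintype_card]
  exact Nat.card_congr ((digitEquiv b m).symm.subtypeEquiv
    (digitalNet_mem_elemInterval_iff C hk ha))

theorem mB_digitalNet [Fact (1 < b)] (l : Fin (b ^ m)) :
    mB b (digitalNet b m s C) k l =
      Nat.card {w // stackMatrix C k hk *ᵥ w = stackMatrix C k hk *ᵥ (digitEquiv b m).symm l}
        - 1 := by
  simp only [mB, forall_le_gammaB_digitalNet_iff C hk]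
  set T := stackMatrix C k hk
  have herase : ({j | j ≠ l ∧ T *ᵥ (digitEquiv b m).symm l = T *ᵥ (digitEquiv b m).symm j} :
      Finset (Fin (b ^ m))) =
      ({j | T *ᵥ (digitEquiv b m).symm j = T *ᵥ (digitEquiv b m).symm l} : Finset _).erase l := by
    ext j
    simp only [mem_erase, mem_filter, mem_univ, true_and, eq_comm]
  rw [herase, card_erase_of_mem (by simp), ← Fintype.card_subtype, ← Nat.card_eq_fintype_card]
  exact congrArg (· - 1) (Nat.card_congr ((digitEquiv b m).symm.subtypeEquiv fun _ => Iff.rfl))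

variable [Fact b.Prime]

theorem stackRank_eq_finrank_range :
    stackRank b m s C k hk =
      Module.finrank (ZMod b) (LinearMap.range (stackMatrix C k hk).mulVecLin) := rfl

theorem natCard_ker_stackMatrix :
    Nat.card (LinearMap.ker (stackMatrix C k hk).mulVecLin) =
      b ^ (m - stackRank b m s C k hk) := by
  have hrank := LinearMap.finrank_range_add_finrank_ker (stackMatrix C k hk).mulVecLin
  rw [Module.finrank_fin_fun, ← stackRank_eq_finrank_range] at hrank
  rw [Nat.card_eq_fintype_card, Module.card_eq_pow_finrank (K := ZMod b), ZMod.card]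
  congr 1
  omega

theorem MB_digitalNet :
    MB b (digitalNet b m s C) k = b ^ m * (b ^ (m - stackRank b m s C k hk) - 1) := by
  have hfiber (l : Fin (b ^ m)) : mB b (digitalNet b m s C) k l =
      b ^ (m - stackRank b m s C k hk) - 1 := by
    rw [mB_digitalNet C hk, ← natCard_ker_stackMatrix C hk]
    exact congrArg (· - 1)
      (natCard_fiber_eq_natCard_ker (stackMatrix C k hk).mulVecLin ((digitEquiv b m).symm l))
  simp only [MB, hfiber, sum_const, card_univ, Fintype.card_fin, smul_eq_mul]

theorem stackRank_eq_sum_iff_surjective :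
    stackRank b m s C k hk = ∑ j, k j ↔ Function.Surjective (stackMatrix C k hk).mulVecLin := by
  have hdim : Module.finrank (ZMod b) (((j : Fin s) × Fin (k j)) → ZMod b) = ∑ j, k j := by
    simp
  rw [stackRank_eq_finrank_range, ← LinearMap.range_eq_top, ← hdim]
  exact ⟨Submodule.eq_top_of_finrank_eq, fun h => by rw [h, finrank_top]⟩

theorem kEquidistributed_digitalNet_iff :
    kEquidistributed b m (digitalNet b m s C) k ↔ stackRank b m s C k hk = ∑ j, k j := by
  constructor
  · intro hequi
    refine (stackRank_eq_sum_iff_surjective C hk).2 fun v => ?_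
    by_contra hv
    obtain ⟨a, ha, rfl⟩ := exists_cellVec_eq v
    have hcount := hequi a ha
    have : IsEmpty {w // stackMatrix C k hk *ᵥ w = cellVec b k a} := ⟨fun w => hv ⟨w.1, w.2⟩⟩
    rw [card_filter_digitalNet_mem_elemInterval C hk ha, Nat.card_of_isEmpty] at hcount
    exact pow_ne_zero _ (NeZero.ne b) hcount.symm
  · intro hrank a ha
    obtain ⟨w₀, hw₀⟩ := (stackRank_eq_sum_iff_surjective C hk).1 hrank (cellVec b k a)
    rw [card_filter_digitalNet_mem_elemInterval C hk ha, ← hw₀, ← hrank,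
      ← natCard_ker_stackMatrix C hk]
    exact natCard_fiber_eq_natCard_ker (stackMatrix C k hk).mulVecLin w₀

theorem CB_digitalNet_le_one_iff (hsum : ∑ j, k j ≤ m) :
    CB b (digitalNet b m s C) k ≤ 1 ↔ stackRank b m s C k hk = ∑ j, k j := by
  have hρ : stackRank b m s C k hk ≤ ∑ j, k j :=
    (Matrix.rank_le_card_height (stackMatrix C k hk)).trans_eq (by simp)
  have hb : (2 : ℝ) ≤ b := by exact_mod_cast (Fact.out : b.Prime).two_le
  rw [← pow_mul_pow_sub_one_div_pow_sub_one_le_one_iff hb hsum hρ, CB, MB_digitalNet C hk,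
    Nat.cast_mul, Nat.cast_sub (Nat.one_le_pow _ _ (Nat.pos_of_neZero b))]
  push_cast
  rw [mul_left_comm, mul_div_mul_left _ _ (pow_ne_zero _ (NeZero.ne _))]

end Counting

theorem stmt10_general (b m s : ℕ) [Fact (Nat.Prime b)]
    (C : Fin s → Matrix (Fin m) (Fin m) (ZMod b))
    (k : Fin s → ℕ) (hk : ∑ j, k j ≤ m) :
    kEquidistributed b m (digitalNet b m s C) k ↔ CB b (digitalNet b m s C) k ≤ 1 := by
  have hk' : ∀ j, k j ≤ m := fun j =>
    (Finset.single_le_sum (fun _ _ => Nat.zero_le _) (Finset.mem_univ j)).trans hk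
  rw [kEquidistributed_digitalNet_iff C hk', CB_digitalNet_le_one_iff C hk' hk]

theorem stmt10 (b m s : ℕ) [Fact (Nat.Prime b)] (hm : 1 ≤ m)
    (C : Fin s → Matrix (Fin m) (Fin m) (ZMod b)) (hC : ∀ ℓ, IsUnit (C ℓ))
    (k : Fin s → ℕ) (hk : ∑ j, k j ≤ m) :
    kEquidistributed b m (digitalNet b m s C) k ↔ CB b (digitalNet b m s C) k ≤ 1 :=
  stmt10_general b m s C k hk
end
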